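/- If x, y ∈ ℝ^M are nonnegative vectors with equal positive means and y majorizes x (i.e., x is obtained from y by a finite sequence of Robin Hood transfers), then g(x) ≤ g(y): the Gini index is Schur-convex on vectors of fixed mean. -/
import Mathlib


open scoped BigOperators

/-- The Gini index of a vector. -/
noncomputable def gini {M : ℕ} (x : Fin M → ℝ) : ℝ :=
  (∑ m, ∑ n, |x m - x n|) / (2 * (M : ℝ) ^ 2 * ((∑ m, x m) / (M : ℝ)))

/-- One Robin Hood transfer: `x` is obtained from `y` by moving `ε` from a
richer entry `j` to a poorer entry `i`. -/
def RobinHoodStep {M : ℕ} (x y : Fin M → ℝ) : Prop :=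
  ∃ i j : Fin M, ∃ ε : ℝ, i ≠ j ∧ y i < y j ∧ 0 < ε ∧ ε ≤ (y j - y i) / 2 ∧
    x = Function.update (Function.update y i (y i + ε)) j (y j - ε)

open Finset in
lemma sum_split_two {M : ℕ} {i j : Fin M} (hij : i ≠ j) (F : Fin M → ℝ) :
    ∑ n, F n = F i + F j + ∑ n ∈ (Finset.univ.erase i).erase j, F n := by
  have hj : j ∈ Finset.univ.erase i := Finset.mem_erase.2 ⟨hij.symm, Finset.mem_univ j⟩
  rw [← Finset.add_sum_erase _ F (Finset.mem_univ i), ← Finset.add_sum_erase _ F hj, add_assoc]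

lemma interval_abs {a b a' b' c : ℝ} (h1 : a ≤ a') (h2 : a' ≤ b') (h3 : b' ≤ b)
    (hsum : a + b = a' + b') :
    |a' - c| + |b' - c| ≤ |a - c| + |b - c| := by
  rcases abs_cases (a - c) with ⟨e1, f1⟩ | ⟨e1, f1⟩ <;>
  rcases abs_cases (b - c) with ⟨e2, f2⟩ | ⟨e2, f2⟩ <;>
  rcases abs_cases (a' - c) with ⟨e3, f3⟩ | ⟨e3, f3⟩ <;>
  rcases abs_cases (b' - c) with ⟨e4, f4⟩ | ⟨e4, f4⟩ <;>
  linarith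

lemma step_props {M : ℕ} {x y : Fin M → ℝ} (h : RobinHoodStep x y) :
    (∑ m, x m = ∑ m, y m) ∧
    (∑ m, ∑ n, |x m - x n|) ≤ (∑ m, ∑ n, |y m - y n|) := by
  obtain ⟨i, j, ε, hij, hlt, hε, hε2, hxdef⟩ := h
  have hxi : x i = y i + ε := by
    rw [hxdef, Function.update_of_ne hij, Function.update_self]
  have hxj : x j = y j - ε := by rw [hxdef, Function.update_self]
  have hxk : ∀ k, k ≠ i → k ≠ j → x k = y k := by
    intro k hki hkj
    rw [hxdef, Function.update_of_ne hkj, Function.update_of_ne hki]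
  set s := (Finset.univ.erase i).erase j with hs
  have hks : ∀ k ∈ s, x k = y k := by
    intro k hk
    simp only [hs, Finset.mem_erase] at hk
    exact hxk k hk.2.1 hk.1
  have hsx : ∑ m, x m = x i + x j + ∑ n ∈ s, x n := sum_split_two hij x
  have hsy : ∑ m, y m = y i + y j + ∑ n ∈ s, y n := sum_split_two hij y
  have hsum : ∑ m, x m = ∑ m, y m := by
    rw [hsx, hsy, Finset.sum_congr rfl hks, hxi, hxj]; ring
  refine ⟨hsum, ?_⟩
  -- abbreviations
  have key : ∀ c : ℝ, |x i - c| + |x j - c| ≤ |y i - c| + |y j - c| := by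
    intro c
    rw [hxi, hxj]
    exact interval_abs (by linarith) (by linarith) (by linarith) (by ring)
  have Rx : ∀ m : Fin M, ∑ n, |x m - x n| =
      |x m - x i| + |x m - x j| + ∑ n ∈ s, |x m - y n| := by
    intro m
    rw [sum_split_two hij (fun n => |x m - x n|)]
    congr 1
    exact Finset.sum_congr rfl fun k hk => by rw [hks k hk]
  have Ry : ∀ m : Fin M, ∑ n, |y m - y n| =
      |y m - y i| + |y m - y j| + ∑ n ∈ s, |y m - y n| := by
    intro m
    rw [sum_split_two hij (fun n => |y m - y n|)]
  rw [sum_split_two hij (fun m => ∑ n, |x m - x n|),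
      sum_split_two hij (fun m => ∑ n, |y m - y n|)]
  simp only [Rx, Ry]
  have hmid : ∀ m ∈ s, |x m - x i| + |x m - x j| + ∑ n ∈ s, |x m - y n| ≤
      |y m - y i| + |y m - y j| + ∑ n ∈ s, |y m - y n| := by
    intro m hm
    rw [hks m hm]
    have h1 : |y m - x i| + |y m - x j| ≤ |y m - y i| + |y m - y j| := by
      have := key (y m)
      calc |y m - x i| + |y m - x j| = |x i - y m| + |x j - y m| := by
            rw [abs_sub_comm, abs_sub_comm (y m)]
        _ ≤ |y i - y m| + |y j - y m| := key (y m)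
        _ = |y m - y i| + |y m - y j| := by rw [abs_sub_comm, abs_sub_comm (y j)]
    linarith [le_refl (∑ n ∈ s, |y m - y n|)]
  have hii : |x i - x i| + |x i - x j| + ∑ n ∈ s, |x i - y n| +
      (|x j - x i| + |x j - x j| + ∑ n ∈ s, |x j - y n|) ≤
      |y i - y i| + |y i - y j| + ∑ n ∈ s, |y i - y n| +
      (|y j - y i| + |y j - y j| + ∑ n ∈ s, |y j - y n|) := by
    have h1 : |x i - x j| ≤ |y i - y j| := by
      rw [hxi, hxj, abs_of_nonpos (by linarith), abs_of_nonpos (by linarith)]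
      linarith
    have h2 : |x j - x i| ≤ |y j - y i| := by
      rw [abs_sub_comm, abs_sub_comm (y j)]; exact h1
    have h3 : ∑ n ∈ s, (|x i - y n| + |x j - y n|) ≤
        ∑ n ∈ s, (|y i - y n| + |y j - y n|) := by
      apply Finset.sum_le_sum
      intro c hc
      exact key (y c)
    rw [Finset.sum_add_distrib, Finset.sum_add_distrib] at h3
    simp only [sub_self, abs_zero]
    linarith
  have hrest : ∑ m ∈ s, (|x m - x i| + |x m - x j| + ∑ n ∈ s, |x m - y n|) ≤
      ∑ m ∈ s, (|y m - y i| + |y m - y j| + ∑ n ∈ s, |y m - y n|) :=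
    Finset.sum_le_sum hmid
  linarith


/-- The Gini index is Schur-convex: Robin Hood transfers do not increase it. -/
theorem gini_schur_convex {M : ℕ} (x y : Fin M → ℝ)
    (hx : ∀ m, 0 ≤ x m) (hy : ∀ m, 0 ≤ y m)
    (hmean : (∑ m, x m) / (M : ℝ) = (∑ m, y m) / (M : ℝ))
    (hpos : 0 < (∑ m, y m) / (M : ℝ))
    (h : Relation.ReflTransGen RobinHoodStep x y) :
    gini x ≤ gini y := by
  clear hx hy
  have main : (∑ m, x m = ∑ m, y m) ∧
      (∑ m, ∑ n, |x m - x n|) ≤ (∑ m, ∑ n, |y m - y n|) := by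
    clear hmean hpos
    induction h with
    | refl => exact ⟨rfl, le_refl _⟩
    | tail hxb hbc ih =>
      obtain ⟨h1, h2⟩ := step_props hbc
      exact ⟨ih.1.trans h1, ih.2.trans h2⟩
  have hM : 0 < (M : ℝ) := by
    by_contra hM
    push_neg at hM
    have : (M : ℝ) = 0 := le_antisymm hM (Nat.cast_nonneg M)
    rw [this, div_zero] at hpos
    exact lt_irrefl 0 hpos
  have hden : 0 < 2 * (M : ℝ) ^ 2 * ((∑ m, y m) / (M : ℝ)) := by positivity
  unfold gini
  rw [main.1]
  exact (div_le_div_iff_of_pos_right hden).mpr main.2
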